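/- arXiv:0709.2555 — 3 statements merged into one kernel-verified Lean document; each statement's English description precedes it below -/
import Mathlib

section
/- Let 𝒫 be a configuration of n points in general position in the plane, with n even. Then there exists an integer i with 0 ≤ i ≤ n such that the number of unordered pairs {P,Q} of distinct points of 𝒫 for which n(P,Q) is even equals i(n−i); for all remaining pairs, n(P,Q) is odd. -/
open scoped Classical

noncomputable section

/-- The set Pts is in general position: no three distinct points are collinear. -/
def GenPos (Pts : Finset (ℝ × ℝ)) : Prop :=
  ∀ A ∈ Pts, ∀ B ∈ Pts, ∀ C ∈ Pts, A ≠ B → A ≠ C → B ≠ C →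
    ¬ Collinear ℝ ({A, B, C} : Set (ℝ × ℝ))

/-- `sepCount Pts P Q` is the number of unordered pairs `{R, S}` of points of `Pts \ {P, Q}`
such that the line through `R` and `S` strictly separates `P` and `Q`. -/
def sepCount (Pts : Finset (ℝ × ℝ)) (P Q : ℝ × ℝ) : ℕ :=
  ((Finset.powersetCard 2 (Pts \ {P, Q})).filter
    (fun s => (affineSpan ℝ (↑s : Set (ℝ × ℝ))).SOppSide P Q)).card

/-- The vertices of the convex hull of `Pts` (its extreme points). -/
def hullVertices (Pts : Finset (ℝ × ℝ)) : Set (ℝ × ℝ) :=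
  Set.extremePoints ℝ (convexHull ℝ (↑Pts : Set (ℝ × ℝ)))

/-- `Q : ZMod k → ℝ × ℝ` lists the points of `S` in convex position, in cyclic order:
`Q` is an injective enumeration of `S` and, for every `i`, all points of `S` other than
`Q i` and `Q (i+1)` lie strictly on the same side of the line through `Q i` and `Q (i+1)`
(i.e. each consecutive pair spans an edge of the convex hull of `S`). -/
def IsConvexCycle (k : ℕ) (S : Set (ℝ × ℝ)) (Q : ZMod k → ℝ × ℝ) : Prop :=
  Function.Injective Q ∧ Set.range Q = S ∧
    ∀ i : ZMod k, ∀ x ∈ S, ∀ y ∈ S,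
      x ∉ ({Q i, Q (i + 1)} : Set (ℝ × ℝ)) → y ∉ ({Q i, Q (i + 1)} : Set (ℝ × ℝ)) →
        (affineSpan ℝ ({Q i, Q (i + 1)} : Set (ℝ × ℝ))).SSameSide x y

/-!
Fix three points `P, Q, R` of the configuration. A line through two of the other `n - 3` points
misses `P, Q, R`, so it separates an even number of the pairs `PQ, QR, PR`. For each other point
`S`, the lines `SR, SP, SQ` separate `PQ, QR, PR` respectively an odd number of times (three
times if `S` lies inside the triangle, once otherwise). As `n - 3` is odd,
`n(P,Q) + n(Q,R) + n(P,R)` is odd. Hence, colouring each point `X` by the parity of `n(P₀, X)`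
(and `P₀` itself as odd), `n(P,Q)` is even exactly when `P` and `Q` have different colours, and
the even pairs are the `i (n - i)` bichromatic ones.
-/

open Finset AffineMap

section Cut

variable {α : Type*} [DecidableEq α]

lemma Finset.pair_eq_pair_iff {x y z w : α} :
    ({x, y} : Finset α) = {z, w} ↔ x = z ∧ y = w ∨ x = w ∧ y = z := by
  rw [← coe_inj, coe_pair, coe_pair, Set.pair_eq_pair_iff]

lemma exists_pair_eq_and_iff {r : α → α → Prop} (hr : ∀ x y, r x y → r y x) {x y : α}
    (hxy : x ≠ y) : (∃ P Q, P ≠ Q ∧ ({x, y} : Finset α) = {P, Q} ∧ r P Q) ↔ r x y := by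
  refine ⟨fun ⟨P, Q, _, h, hPQ⟩ => ?_, fun h => ⟨x, y, hxy, rfl, h⟩⟩
  rcases Finset.pair_eq_pair_iff.1 h with ⟨rfl, rfl⟩ | ⟨rfl, rfl⟩
  · exact hPQ
  · exact hr _ _ hPQ

lemma exists_cut_of_odd_triangle (s : Finset α) (f : α → α → ℕ) (hsymm : ∀ x y, f x y = f y x)
    (htri : ∀ x ∈ s, ∀ y ∈ s, ∀ z ∈ s, x ≠ y → x ≠ z → y ≠ z → Odd (f x y + f y z + f x z)) :
    ∃ A ⊆ s, ∀ x ∈ s, ∀ y ∈ s, x ≠ y → (Even (f x y) ↔ (x ∈ A ↔ y ∉ A)) := by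
  rcases s.eq_empty_or_nonempty with rfl | ⟨x₀, hx₀⟩
  · exact ⟨∅, empty_subset _, by simp⟩
  refine ⟨{x ∈ s | x = x₀ ∨ Odd (f x₀ x)}, filter_subset _ _, fun x hx y hy hxy => ?_⟩
  by_cases hx0 : x = x₀
  · subst hx0
    simp [hx, hy, Ne.symm hxy]
  by_cases hy0 : y = x₀
  · subst hy0
    simp [hx, hy, hx0, hsymm x]
  have := htri x₀ hx₀ x hx y hy (Ne.symm hx0) (Ne.symm hy0) hxy
  simp only [mem_filter, hx, hy, hx0, hy0, true_and, false_or]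
  simp only [← Nat.not_even_iff_odd, Nat.even_add] at this ⊢
  tauto

lemma card_filter_cut {A s : Finset α} (hA : A ⊆ s) :
    #{t ∈ powersetCard 2 s | ∃ P Q, P ≠ Q ∧ t = {P, Q} ∧ (P ∈ A ↔ Q ∉ A)} = #A * (#s - #A) := by
  have hcut : {t ∈ powersetCard 2 s | ∃ P Q, P ≠ Q ∧ t = {P, Q} ∧ (P ∈ A ↔ Q ∉ A)} =
      (A ×ˢ (s \ A)).image fun p => {p.1, p.2} := by
    ext t
    simp only [mem_filter, mem_powersetCard, mem_image, mem_product, mem_sdiff, Prod.exists]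
    constructor
    · rintro ⟨⟨hts, -⟩, P, Q, -, rfl, hPQ⟩
      by_cases hP : P ∈ A
      · exact ⟨P, Q, ⟨hP, hts (by simp), hPQ.1 hP⟩, rfl⟩
      · exact ⟨Q, P, ⟨by tauto, hts (by simp), hP⟩, pair_comm Q P⟩
    · rintro ⟨a, b, ⟨ha, hb, hbA⟩, rfl⟩
      have hab : a ≠ b := by rintro rfl; exact hbA ha
      refine ⟨⟨?_, card_pair hab⟩, a, b, hab, rfl, by simp [ha, hbA]⟩
      simp [insert_subset_iff, hA ha, hb]
  rw [hcut, card_image_of_injOn, card_product, card_sdiff_of_subset hA]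
  rintro ⟨a, b⟩ hab ⟨c, d⟩ hcd h
  simp only [coe_product, coe_sdiff, Set.mem_prod, Set.mem_sdiff, mem_coe] at hab hcd
  rcases Finset.pair_eq_pair_iff.1 h with ⟨rfl, rfl⟩ | ⟨rfl, rfl⟩
  · rfl
  · exact absurd hab.1 hcd.2.2

theorem exists_card_even_eq_mul_sub (s : Finset α) (f : α → α → ℕ)
    (hsymm : ∀ x y, f x y = f y x)
    (htri : ∀ x ∈ s, ∀ y ∈ s, ∀ z ∈ s, x ≠ y → x ≠ z → y ≠ z → Odd (f x y + f y z + f x z)) :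
    ∃ i ≤ #s,
      #{t ∈ powersetCard 2 s | ∃ P Q, P ≠ Q ∧ t = {P, Q} ∧ Even (f P Q)} = i * (#s - i) ∧
      #{t ∈ powersetCard 2 s | ∃ P Q, P ≠ Q ∧ t = {P, Q} ∧ Odd (f P Q)} =
        (#s).choose 2 - i * (#s - i) := by
  obtain ⟨A, hAs, hA⟩ := exists_cut_of_odd_triangle s f hsymm htri
  have hcut : ∀ t ∈ powersetCard 2 s,
      ((∃ P Q, P ≠ Q ∧ t = {P, Q} ∧ Even (f P Q)) ↔
        ∃ P Q, P ≠ Q ∧ t = {P, Q} ∧ (P ∈ A ↔ Q ∉ A)) ∧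
      ((∃ P Q, P ≠ Q ∧ t = {P, Q} ∧ Odd (f P Q)) ↔
        ¬∃ P Q, P ≠ Q ∧ t = {P, Q} ∧ (P ∈ A ↔ Q ∉ A)) := by
    intro t ht
    obtain ⟨hts, x, y, hxy, rfl⟩ := And.imp_right card_eq_two.1 (mem_powersetCard.1 ht)
    have hcomm (p : ℕ → Prop) (x y : α) : p (f x y) → p (f y x) := by rw [hsymm]; exact id
    rw [exists_pair_eq_and_iff (hcomm _) hxy, exists_pair_eq_and_iff (hcomm _) hxy,
      exists_pair_eq_and_iff (fun _ _ => by tauto) hxy, ← Nat.not_even_iff_odd,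
      hA x (hts (by simp)) y (hts (by simp)) hxy]
    exact ⟨Iff.rfl, Iff.rfl⟩
  refine ⟨#A, card_le_card hAs, ?_, ?_⟩
  · rw [← card_filter_cut hAs, filter_congr fun t ht => (hcut t ht).1]
  · rw [filter_congr fun t ht => (hcut t ht).2, filter_not,
      card_sdiff_of_subset (filter_subset _ _), card_filter_cut hAs, card_powersetCard]

end Cut

/-- Twice the signed area of the triangle `ABC`. -/
def orient (A B C : ℝ × ℝ) : ℝ :=
  (B.1 - A.1) * (C.2 - A.2) - (B.2 - A.2) * (C.1 - A.1)

lemma orient_lineMap (A B x y : ℝ × ℝ) (t : ℝ) :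
    orient A B (lineMap x y t) = (1 - t) * orient A B x + t * orient A B y := by
  simp only [orient, lineMap_apply_module, Prod.fst_add, Prod.snd_add, Prod.smul_fst,
    Prod.smul_snd, smul_eq_mul]
  ring

lemma collinear_iff_orient_eq_zero (A B C : ℝ × ℝ) :
    Collinear ℝ ({A, B, C} : Set (ℝ × ℝ)) ↔ orient A B C = 0 := by
  by_cases hBA : B = A
  · subst hBA
    simp [collinear_pair, orient]
  rw [collinear_iff_of_mem (Set.mem_insert A _)]
  constructor
  · rintro ⟨v, hv⟩
    obtain ⟨r, rfl⟩ := hv B (by simp)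
    obtain ⟨s, rfl⟩ := hv C (by simp)
    simp only [orient, vadd_eq_add, Prod.fst_add, Prod.snd_add, Prod.smul_fst, Prod.smul_snd,
      smul_eq_mul]
    ring
  · intro h
    have hN : (B.1 - A.1) ^ 2 + (B.2 - A.2) ^ 2 ≠ 0 := by
      intro h0
      exact hBA (Prod.ext (by nlinarith) (by nlinarith))
    refine ⟨B - A, fun p hp => ?_⟩
    simp only [Set.mem_insert_iff, Set.mem_singleton_iff] at hp
    rcases hp with rfl | rfl | rfl
    · exact ⟨0, by simp⟩
    · exact ⟨1, by simp⟩
    -- the orthogonal projection of `p - A` onto the line spanned by `B - A`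
    refine ⟨((p.1 - A.1) * (B.1 - A.1) + (p.2 - A.2) * (B.2 - A.2)) /
      ((B.1 - A.1) ^ 2 + (B.2 - A.2) ^ 2), Prod.ext ?_ ?_⟩ <;>
      simp only [orient] at h <;>
      simp only [vadd_eq_add, Prod.fst_add, Prod.snd_add, Prod.smul_fst, Prod.smul_snd,
        Prod.fst_sub, Prod.snd_sub, smul_eq_mul] <;>
      field_simp
    · linear_combination -(B.2 - A.2) * h
    · linear_combination (B.1 - A.1) * h

lemma mem_line_iff_orient_eq_zero {A B : ℝ × ℝ} (hAB : A ≠ B) (x : ℝ × ℝ) :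
    x ∈ line[ℝ, A, B] ↔ orient A B x = 0 := by
  rw [← collinear_iff_orient_eq_zero]
  refine ⟨fun h => ?_, fun h => h.mem_affineSpan_of_mem_of_ne (by simp) (by simp) (by simp) hAB⟩
  exact (collinear_insert_of_mem_affineSpan_pair h).subset (by grind)

lemma sOppSide_line_iff {A B : ℝ × ℝ} (hAB : A ≠ B) (x y : ℝ × ℝ) :
    line[ℝ, A, B].SOppSide x y ↔ orient A B x * orient A B y < 0 := by
  simp only [AffineSubspace.SOppSide, AffineSubspace.wOppSide_iff_exists_wbtw, Wbtw,
    affineSegment, Set.mem_image, mem_line_iff_orient_eq_zero hAB]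
  set a := orient A B x
  set b := orient A B y
  constructor
  · rintro ⟨⟨p, hp, t, ⟨ht0, ht1⟩, rfl⟩, ha, hb⟩
    rw [orient_lineMap] at hp
    have hmul : t * (a * b) = -((1 - t) * a ^ 2) := by linear_combination a * hp
    rcases ht0.eq_or_lt with rfl | ht
    · exact absurd (by simpa using hp) ha
    by_contra hab
    have hab' : 0 < a * b := (not_lt.1 hab).lt_of_ne' (mul_ne_zero ha hb)
    nlinarith [mul_pos ht hab', mul_nonneg (sub_nonneg.2 ht1) (sq_nonneg a)]
  · intro hab
    have ha : a ≠ 0 := by rintro h; simp [h] at hab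
    have hb : b ≠ 0 := by rintro h; simp [h] at hab
    have hd : 0 < (a - b) ^ 2 := by nlinarith [sq_nonneg (a + b)]
    have hne : a - b ≠ 0 := fun h => by simp [h] at hd
    -- the point where the segment `[x, y]` crosses the line: `t = a / (a - b)`
    refine ⟨⟨_, ?_, (a ^ 2 - a * b) / (a - b) ^ 2, ⟨?_, ?_⟩, rfl⟩, ha, hb⟩
    · rw [orient_lineMap]
      change (1 - _) * a + _ * b = 0
      field_simp
      ring
    · exact div_nonneg (by nlinarith) hd.le
    · exact (div_le_one hd).2 (by nlinarith)

lemma even_card_mul_neg {a b c : ℝ} (ha : a ≠ 0) (hb : b ≠ 0) (hc : c ≠ 0) :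
    Even ((if a * b < 0 then 1 else 0) + (if b * c < 0 then 1 else 0) +
      (if a * c < 0 then 1 else 0) : ℕ) := by
  rcases ha.lt_or_gt with ha | ha <;> rcases hb.lt_or_gt with hb | hb <;>
    rcases hc.lt_or_gt with hc | hc <;>
    simp [mul_neg_iff, ha, hb, hc, ha.not_gt, hb.not_gt, hc.not_gt]

lemma odd_card_mul_pos {a b c : ℝ} (ha : a ≠ 0) (hb : b ≠ 0) (hc : c ≠ 0) :
    Odd ((if 0 < a * b then 1 else 0) + (if 0 < b * c then 1 else 0) +
      (if 0 < a * c then 1 else 0) : ℕ) := by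
  rcases ha.lt_or_gt with ha | ha <;> rcases hb.lt_or_gt with hb | hb <;>
    rcases hc.lt_or_gt with hc | hc <;>
    simp [mul_pos_iff, ha, hb, hc, ha.not_gt, hb.not_gt, hc.not_gt, Nat.odd_iff]

lemma even_sOppSide_line {A B P Q R : ℝ × ℝ} (hAB : A ≠ B) (hP : P ∉ line[ℝ, A, B])
    (hQ : Q ∉ line[ℝ, A, B]) (hR : R ∉ line[ℝ, A, B]) :
    Even ((if line[ℝ, A, B].SOppSide P Q then 1 else 0) +
      (if line[ℝ, A, B].SOppSide Q R then 1 else 0) +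
      (if line[ℝ, A, B].SOppSide P R then 1 else 0) : ℕ) := by
  rw [mem_line_iff_orient_eq_zero hAB] at hP hQ hR
  simp only [sOppSide_line_iff hAB]
  exact even_card_mul_neg hP hQ hR

lemma odd_sOppSide_spokes {S P Q R : ℝ × ℝ} (hSPQ : ¬Collinear ℝ ({S, P, Q} : Set (ℝ × ℝ)))
    (hSQR : ¬Collinear ℝ ({S, Q, R} : Set (ℝ × ℝ)))
    (hSRP : ¬Collinear ℝ ({S, R, P} : Set (ℝ × ℝ))) :
    Odd ((if line[ℝ, R, S].SOppSide P Q then 1 else 0) +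
      (if line[ℝ, P, S].SOppSide Q R then 1 else 0) +
      (if line[ℝ, Q, S].SOppSide P R then 1 else 0) : ℕ) := by
  rw [collinear_iff_orient_eq_zero] at hSPQ hSQR hSRP
  have hRS : R ≠ S := by rintro rfl; simp [orient] at hSQR
  have hPS : P ≠ S := by rintro rfl; simp [orient] at hSRP
  have hQS : Q ≠ S := by rintro rfl; simp [orient] at hSPQ
  have hR : orient R S P * orient R S Q = -(orient S Q R * orient S R P) := by
    simp only [orient]; ring
  have hP : orient P S Q * orient P S R = -(orient S R P * orient S P Q) := by
    simp only [orient]; ring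
  have hQ : orient Q S P * orient Q S R = -(orient S Q R * orient S P Q) := by
    simp only [orient]; ring
  simp only [sOppSide_line_iff hRS, sOppSide_line_iff hPS, sOppSide_line_iff hQS, hR, hP, hQ,
    neg_lt_zero]
  exact odd_card_mul_pos hSQR hSRP hSPQ

def sepCountIn (V : Finset (ℝ × ℝ)) (X Y : ℝ × ℝ) : ℕ :=
  ((powersetCard 2 V).filter fun s : Finset (ℝ × ℝ) =>
    (affineSpan ℝ (s : Set (ℝ × ℝ))).SOppSide X Y).card

/- The pairs in `sepCount` are elaborated through a monadic coercion, so its filter runs over the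
image of `powersetCard 2 _` in `Finset (Set (ℝ × ℝ))`; `sepCountIn` avoids this by typing `s`. -/
lemma sepCount_eq_sepCountIn (Pts : Finset (ℝ × ℝ)) (P Q : ℝ × ℝ) :
    sepCount Pts P Q = sepCountIn (Pts \ {P, Q}) P Q := by
  simp only [sepCount, sepCountIn, Finset.bind_def, Finset.pure_def, sup_singleton_apply,
    filter_image]
  exact card_image_of_injective _ SetLike.coe_injective

lemma sepCountIn_insert {R : ℝ × ℝ} {V : Finset (ℝ × ℝ)} (hR : R ∉ V) (X Y : ℝ × ℝ) :
    sepCountIn (insert R V) X Y = sepCountIn V X Y + #{S ∈ V | line[ℝ, R, S].SOppSide X Y} := by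
  have hpairs : (powersetCard 1 V).image (insert R) = V.image fun S => {R, S} := by
    rw [powersetCard_one, map_eq_image, image_image]
    rfl
  have hdisj : Disjoint (powersetCard 2 V) (V.image fun S => {R, S}) := by
    simp only [disjoint_left, mem_powersetCard, mem_image]
    rintro _ ⟨hsub, -⟩ ⟨S, -, rfl⟩
    exact hR (hsub (mem_insert_self R {S}))
  have hinj : Set.InjOn (fun S => ({R, S} : Finset (ℝ × ℝ))) V := by
    intro S hS T _ hST
    have hS' : S ∈ ({R, T} : Finset (ℝ × ℝ)) := by
      rw [← show ({R, S} : Finset (ℝ × ℝ)) = {R, T} from hST]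
      simp
    rcases mem_insert.1 hS' with rfl | h
    · exact absurd hS hR
    · exact mem_singleton.1 h
  rw [sepCountIn, powersetCard_succ_insert hR, hpairs, filter_union,
    card_union_of_disjoint (disjoint_filter_filter hdisj), filter_image,
    card_image_of_injOn (hinj.mono (filter_subset _ _))]
  simp [sepCountIn]

lemma sepCount_comm (Pts : Finset (ℝ × ℝ)) (P Q : ℝ × ℝ) :
    sepCount Pts P Q = sepCount Pts Q P := by
  simp only [sepCount_eq_sepCountIn, sepCountIn, pair_comm P Q, AffineSubspace.sOppSide_comm]

lemma GenPos.notMem_line {Pts : Finset (ℝ × ℝ)} (hgen : GenPos Pts) {A B C : ℝ × ℝ}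
    (hA : A ∈ Pts) (hB : B ∈ Pts) (hC : C ∈ Pts) (hAB : A ≠ B) (hAC : A ≠ C) (hBC : B ≠ C) :
    C ∉ line[ℝ, A, B] := fun h =>
  hgen A hA B hB C hC hAB hAC hBC ((collinear_insert_of_mem_affineSpan_pair h).subset (by grind))

theorem odd_sepCount_add_add {Pts : Finset (ℝ × ℝ)} (hgen : GenPos Pts) (hn : Even #Pts)
    {P Q R : ℝ × ℝ} (hP : P ∈ Pts) (hQ : Q ∈ Pts) (hR : R ∈ Pts)
    (hPQ : P ≠ Q) (hPR : P ≠ R) (hQR : Q ≠ R) :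
    Odd (sepCount Pts P Q + sepCount Pts Q R + sepCount Pts P R) := by
  set U := Pts \ {P, Q, R} with hU
  have hUodd : Odd #U := by
    have hcard := card_sdiff_add_card_eq_card (s := {P, Q, R}) (t := Pts) (by grind)
    rw [← hU, card_eq_three.2 ⟨P, Q, R, hPQ, hPR, hQR, rfl⟩] at hcard
    obtain ⟨k, hk⟩ := hn
    exact ⟨k - 2, by omega⟩
  have hPU : P ∉ U := by simp [U]
  have hQU : Q ∉ U := by simp [U]
  have hRU : R ∉ U := by simp [U]
  rw [sepCount_eq_sepCountIn, sepCount_eq_sepCountIn, sepCount_eq_sepCountIn,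
    show Pts \ {P, Q} = insert R U by grind, show Pts \ {Q, R} = insert P U by grind,
    show Pts \ {P, R} = insert Q U by grind,
    sepCountIn_insert hRU, sepCountIn_insert hPU, sepCountIn_insert hQU]
  have hlines : Even (sepCountIn U P Q + sepCountIn U Q R + sepCountIn U P R) := by
    simp only [sepCountIn, card_filter, ← sum_add_distrib]
    refine even_sum _ fun s hs => ?_
    obtain ⟨hsub, A, B, hAB, rfl⟩ := And.imp_right card_eq_two.1 (mem_powersetCard.1 hs)
    have hA : A ∈ U := hsub (by simp)
    have hB : B ∈ U := hsub (by simp)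
    simp only [U, mem_sdiff, mem_insert, mem_singleton, not_or] at hA hB
    rw [coe_pair]
    exact even_sOppSide_line hAB
      (hgen.notMem_line hA.1 hB.1 hP hAB hA.2.1 hB.2.1)
      (hgen.notMem_line hA.1 hB.1 hQ hAB hA.2.2.1 hB.2.2.1)
      (hgen.notMem_line hA.1 hB.1 hR hAB hA.2.2.2 hB.2.2.2)
  have hspokes : Odd (#{S ∈ U | line[ℝ, R, S].SOppSide P Q} +
      #{S ∈ U | line[ℝ, P, S].SOppSide Q R} + #{S ∈ U | line[ℝ, Q, S].SOppSide P R}) := by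
    simp only [card_filter, ← sum_add_distrib]
    rw [odd_sum_iff_odd_card_odd, filter_true_of_mem fun S hS => ?_]
    · exact hUodd
    simp only [U, mem_sdiff, mem_insert, mem_singleton, not_or] at hS
    obtain ⟨hS, hSP, hSQ, hSR⟩ := hS
    exact odd_sOppSide_spokes (hgen S hS P hP Q hQ hSP hSQ hPQ)
      (hgen S hS Q hQ R hR hSQ hSR hQR)
      (hgen S hS R hR P hP hSR hSP (Ne.symm hPR))
  obtain ⟨a, ha⟩ := hlines
  obtain ⟨b, hb⟩ := hspokes
  exact ⟨a + b, by omega⟩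

/-- If `n` is even, then for some `0 ≤ i ≤ n` exactly `i * (n - i)` of the unordered pairs
of distinct points of the configuration have an even number of separating lines, and the
remaining pairs have an odd number of separating lines. -/
theorem even_card_even_sepCount (n : ℕ) (Pts : Finset (ℝ × ℝ))
    (hgen : GenPos Pts) (hcard : Pts.card = n) (hn : Even n) :
    ∃ i ≤ n,
      ((Finset.powersetCard 2 Pts).filter
        (fun s => ∃ P Q : ℝ × ℝ, P ≠ Q ∧ s = {P, Q} ∧ Even (sepCount Pts P Q))).card
        = i * (n - i) ∧
      ((Finset.powersetCard 2 Pts).filter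
        (fun s => ∃ P Q : ℝ × ℝ, P ≠ Q ∧ s = {P, Q} ∧ Odd (sepCount Pts P Q))).card
        = n.choose 2 - i * (n - i) := by
  subst hcard
  exact exists_card_even_eq_mul_sub Pts (sepCount Pts) (sepCount_comm Pts)
    fun _ hP _ hQ _ hR hPQ hPR hQR => odd_sepCount_add_add hgen hn hP hQ hR hPQ hPR hQR

end
end

section
/- Let 𝒫 be a configuration of n points in general position in the plane whose convex hull has size 3, with hull vertices A, B, C. Then n(A,B) + n(A,C) + n(B,C) = n² − 4n + 3. -/
open scoped Classical

noncomputable section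

/-!
Let `I` be the `n - 3` configuration points inside the triangle `ABC`. A pair counted by
`n(A,B)` either contains `C` or lies in `I`. Every line through `C` and a point of `I` meets the
side `AB`, and general position keeps `A`, `B` off it, so it separates `A` and `B`: this
contributes `n - 3` to each of the three counts. A line through two points `R, S` of `I` misses
`A`, `B`, `C`, and they are not all on one side of it since `R` lies in the triangle; so it
separates exactly two of the three pairs of vertices. The total is
`3 (n - 3) + 2 * choose (n - 3) 2 = n² - 4n + 3`.
-/

namespace AffineSubspace

variable {V P : Type*} [AddCommGroup V] [Module ℝ V] [AddTorsor V P]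

theorem sOppSide_iff_mul_neg {s : AffineSubspace ℝ P} {f : P →ᵃ[ℝ] ℝ}
    (hs : ∀ z, z ∈ s ↔ f z = 0) {x y : P} : s.SOppSide x y ↔ f x * f y < 0 := by
  have hsep : (∃ p ∈ s, Wbtw ℝ x p y) ↔ (0 : ℝ) ∈ Set.uIcc (f x) (f y) := by
    rw [← segment_eq_uIcc, ← affineSegment_eq_segment, ← affineSegment_image]
    simp only [Set.mem_image, hs, Wbtw]
    exact ⟨fun ⟨p, hp, hw⟩ => ⟨p, hw, hp⟩, fun ⟨p, hw, hp⟩ => ⟨p, hp, hw⟩⟩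
  rw [SOppSide, wOppSide_iff_exists_wbtw, hsep, Set.mem_uIcc, hs, hs]
  constructor
  · rintro ⟨h | h, hx, hy⟩
    · exact mul_neg_of_neg_of_pos (h.1.lt_of_ne hx) (h.2.lt_of_ne' hy)
    · exact mul_neg_of_pos_of_neg (h.2.lt_of_ne' hx) (h.1.lt_of_ne hy)
  · intro h
    refine ⟨?_, fun hx => by simp [hx] at h, fun hy => by simp [hy] at h⟩
    rcases mul_neg_iff.1 h with h | h
    · exact Or.inr ⟨h.2.le, h.1.le⟩
    · exact Or.inl ⟨h.1.le, h.2.le⟩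

end AffineSubspace

def lineForm (R S : ℝ × ℝ) : ℝ × ℝ →ᵃ[ℝ] ℝ where
  toFun z := (S.1 - R.1) * (z.2 - R.2) - (S.2 - R.2) * (z.1 - R.1)
  linear := (S.1 - R.1) • LinearMap.snd ℝ ℝ ℝ - (S.2 - R.2) • LinearMap.fst ℝ ℝ ℝ
  map_vadd' z v := by simp; ring

theorem lineForm_apply (R S z : ℝ × ℝ) :
    lineForm R S z = (S.1 - R.1) * (z.2 - R.2) - (S.2 - R.2) * (z.1 - R.1) := rfl

theorem mem_affineSpan_pair_iff_lineForm_eq_zero {R S : ℝ × ℝ} (hRS : R ≠ S) (z : ℝ × ℝ) :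
    z ∈ line[ℝ, R, S] ↔ lineForm R S z = 0 := by
  constructor
  · intro hz
    have := (affineSpan_le (Q := (AffineSubspace.mk' (0 : ℝ) ⊥).comap (lineForm R S))).2
      (by rintro w (rfl | rfl) <;> simp [lineForm_apply, mul_comm]) hz
    simpa using this
  · intro hz
    rw [lineForm_apply] at hz
    have hd : (S.1 - R.1) ^ 2 + (S.2 - R.2) ^ 2 ≠ 0 := by
      intro h
      rw [add_eq_zero_iff_of_nonneg (sq_nonneg _) (sq_nonneg _), sq_eq_zero_iff, sq_eq_zero_iff,
        sub_eq_zero, sub_eq_zero] at h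
      exact hRS (Prod.ext h.1.symm h.2.symm)
    -- `z` is its own orthogonal projection onto the line
    convert AffineMap.lineMap_mem_affineSpan_pair
      (((S.1 - R.1) * (z.1 - R.1) + (S.2 - R.2) * (z.2 - R.2)) /
        ((S.1 - R.1) ^ 2 + (S.2 - R.2) ^ 2)) R S
    ext <;> simp only [AffineMap.lineMap_apply_module', Prod.fst_add, Prod.snd_add, Prod.smul_fst,
      Prod.smul_snd, Prod.fst_sub, Prod.snd_sub, smul_eq_mul] <;> field_simp
    · linear_combination (R.2 - S.2) * hz
    · linear_combination (S.1 - R.1) * hz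

theorem GenPos.notMem_affineSpan_pair {Pts : Finset (ℝ × ℝ)} (hgen : GenPos Pts)
    {R S z : ℝ × ℝ} (hR : R ∈ Pts) (hS : S ∈ Pts) (hz : z ∈ Pts)
    (hRS : R ≠ S) (hzR : z ≠ R) (hzS : z ≠ S) : z ∉ line[ℝ, R, S] := fun h =>
  hgen z hz R hR S hS hzR hzS hRS (collinear_insert_of_mem_affineSpan_pair h)

theorem sOppSide_affineSpan_pair_of_mem_convexHull {E : Type*} [AddCommGroup E] [Module ℝ E]
    {A B C x : E}
    (hx : x ∈ convexHull ℝ {A, B, C}) (hxC : x ≠ C)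
    (hA : A ∉ line[ℝ, C, x]) (hB : B ∉ line[ℝ, C, x]) : line[ℝ, C, x].SOppSide A B := by
  rw [Set.pair_comm B C, Set.insert_comm A C, convexHull_insert (Set.insert_nonempty _ _),
    convexHull_pair, mem_convexJoin] at hx
  obtain ⟨c, hc, y, hy, hxy⟩ := hx
  rw [Set.mem_singleton_iff.1 hc] at hxy
  -- `x` lies on the segment from `C` to a point `y` of the opposite side, so `y` is on the line
  have hyl : y ∈ line[ℝ, C, x] :=
    (mem_segment_iff_wbtw.1 hxy).collinear.mem_affineSpan_of_mem_of_ne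
      (by simp) (by simp) (by simp) hxC.symm
  exact ⟨(mem_segment_iff_wbtw.1 hy).wOppSide₁₃ hyl, hA, hB⟩

theorem ite_mul_neg_add_eq_two {a b c : ℝ} (ha : a ≠ 0) (hb : b ≠ 0) (hc : c ≠ 0)
    (hpos : ¬(0 < a ∧ 0 < b ∧ 0 < c)) (hneg : ¬(a < 0 ∧ b < 0 ∧ c < 0)) :
    ((if a * b < 0 then 1 else 0) + (if a * c < 0 then 1 else 0)
      + (if b * c < 0 then 1 else 0) : ℕ) = 2 := by
  rcases ha.lt_or_gt with ha | ha <;> rcases hb.lt_or_gt with hb | hb <;>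
    rcases hc.lt_or_gt with hc | hc <;>
    simp_all [mul_neg_iff, not_lt_of_gt]

theorem sOppSide_count_eq_two_of_mem_convexHull {A B C R S : ℝ × ℝ} (hRS : R ≠ S)
    (hR : R ∈ convexHull ℝ {A, B, C})
    (hA : A ∉ line[ℝ, R, S]) (hB : B ∉ line[ℝ, R, S]) (hC : C ∉ line[ℝ, R, S]) :
    ((if line[ℝ, R, S].SOppSide A B then 1 else 0) + (if line[ℝ, R, S].SOppSide A C then 1 else 0)
      + (if line[ℝ, R, S].SOppSide B C then 1 else 0) : ℕ) = 2 := by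
  have hline := mem_affineSpan_pair_iff_lineForm_eq_zero hRS
  have hR0 : lineForm R S R = 0 := (hline R).1 (left_mem_affineSpan_pair ℝ R S)
  simp only [AffineSubspace.sOppSide_iff_mul_neg hline]
  -- `R` lies on the line and in the triangle, so the vertices are not all on one side of it
  refine ite_mul_neg_add_eq_two (mt (hline A).2 hA) (mt (hline B).2 hB) (mt (hline C).2 hC)
    (fun h => ?_) (fun h => ?_)
  · have := convexHull_min (t := lineForm R S ⁻¹' Set.Ioi 0) (by simpa [Set.insert_subset_iff])
      ((convex_Ioi 0).affine_preimage _) hR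
    simp [hR0] at this
  · have := convexHull_min (t := lineForm R S ⁻¹' Set.Iio 0) (by simpa [Set.insert_subset_iff])
      ((convex_Iio 0).affine_preimage _) hR
    simp [hR0] at this

open Finset in
theorem Finset.card_filter_powersetCard_two_insert {α : Type*} [DecidableEq α]
    {p : Finset α → Prop} [DecidablePred p] {x : α} {s : Finset α} (hx : x ∉ s)
    (hp : ∀ y ∈ s, p {x, y}) :
    #((powersetCard 2 (insert x s)).filter p) = #s + #((powersetCard 2 s).filter p) := by
  have hxt : ∀ t ∈ powersetCard 1 s, x ∉ t := fun t ht hxt => hx ((mem_powersetCard.1 ht).1 hxt)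
  have hpairs : ((powersetCard 1 s).image (insert x)).filter p =
      (powersetCard 1 s).image (insert x) := by
    refine filter_true_of_mem ?_
    simp only [mem_image, mem_powersetCard, card_eq_one]
    rintro _ ⟨_, ⟨hts, y, rfl⟩, rfl⟩
    exact hp y (hts (mem_singleton_self y))
  have hdisj : Disjoint (powersetCard 2 s) ((powersetCard 1 s).image (insert x)) := by
    simp only [disjoint_left, mem_image, not_exists, not_and]
    rintro t ht u - rfl
    exact hx ((mem_powersetCard.1 ht).1 (mem_insert_self x u))
  rw [powersetCard_succ_insert hx, filter_union, card_union_of_disjoint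
    (disjoint_filter_filter hdisj), hpairs, add_comm, card_image_of_injOn, card_powersetCard,
    Nat.choose_one_right]
  intro t ht u hu htu
  rw [← erase_insert (hxt t ht), ← erase_insert (hxt u hu)]
  exact congrArg (·.erase x) htu

def separatingPairs (I : Finset (ℝ × ℝ)) (P Q : ℝ × ℝ) : Finset (Finset (ℝ × ℝ)) :=
  (I.powersetCard 2).filter fun s => (affineSpan ℝ (s : Set (ℝ × ℝ))).SOppSide P Q

theorem sepCount_eq_card_separatingPairs (Pts : Finset (ℝ × ℝ)) (P Q : ℝ × ℝ) :
    sepCount Pts P Q = (separatingPairs (Pts \ {P, Q}) P Q).card := by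
  rw [sepCount, bind_pure_comp, Finset.fmap_def, Finset.filter_image]
  exact Finset.card_image_of_injective _ Finset.coe_injective

theorem hullVertices_subset (Pts : Finset (ℝ × ℝ)) : hullVertices Pts ⊆ Pts :=
  extremePoints_convexHull_subset

theorem convexHull_hullVertices (Pts : Finset (ℝ × ℝ)) :
    convexHull ℝ (hullVertices Pts) = convexHull ℝ ↑Pts := by
  rw [← ((Pts.finite_toSet.subset (hullVertices_subset Pts)).isClosed_convexHull ℝ).closure_eq]
  exact closure_convexHull_extremePoints (Pts.finite_toSet.isCompact_convexHull ℝ)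
    (convex_convexHull ℝ _)

section HullTriangle

open Finset

variable {Pts : Finset (ℝ × ℝ)} {A B C : ℝ × ℝ}

theorem sepCount_eq_card_add_card_separatingPairs (hgen : GenPos Pts)
    (hA : A ∈ Pts) (hB : B ∈ Pts) (hC : C ∈ Pts) (hAC : A ≠ C) (hBC : B ≠ C)
    (hhull : ↑Pts ⊆ convexHull ℝ {A, B, C}) :
    sepCount Pts A B = #(Pts \ {A, B, C}) + #(separatingPairs (Pts \ {A, B, C}) A B) := by
  have hsplit : Pts \ {A, B} = insert C (Pts \ {A, B, C}) := by
    ext x; by_cases hxC : x = C <;> simp [hxC, hC, hAC.symm, hBC.symm]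
  rw [sepCount_eq_card_separatingPairs, hsplit, separatingPairs]
  refine card_filter_powersetCard_two_insert (by simp) fun y hy => ?_
  simp only [mem_sdiff, mem_insert, mem_singleton, not_or] at hy
  obtain ⟨hy, hyA, hyB, hyC⟩ := hy
  rw [coe_pair]
  exact sOppSide_affineSpan_pair_of_mem_convexHull (hhull hy) hyC
    (hgen.notMem_affineSpan_pair hC hy hA (Ne.symm hyC) hAC (Ne.symm hyA))
    (hgen.notMem_affineSpan_pair hC hy hB (Ne.symm hyC) hBC (Ne.symm hyB))

theorem card_separatingPairs_add_add (hgen : GenPos Pts)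
    (hA : A ∈ Pts) (hB : B ∈ Pts) (hC : C ∈ Pts) (hhull : ↑Pts ⊆ convexHull ℝ {A, B, C}) :
    #(separatingPairs (Pts \ {A, B, C}) A B) + #(separatingPairs (Pts \ {A, B, C}) A C)
      + #(separatingPairs (Pts \ {A, B, C}) B C) = 2 * (#(Pts \ {A, B, C})).choose 2 := by
  simp only [separatingPairs, card_filter, ← sum_add_distrib]
  rw [← card_powersetCard, mul_comm, ← smul_eq_mul, ← sum_const]
  refine sum_congr rfl fun s hs => ?_
  obtain ⟨hsI, hs2⟩ := mem_powersetCard.1 hs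
  obtain ⟨R, S, hRS, rfl⟩ := card_eq_two.1 hs2
  have hI : ∀ x ∈ ({R, S} : Finset _), x ∈ Pts ∧ x ≠ A ∧ x ≠ B ∧ x ≠ C := fun x hx => by
    simpa [not_or] using hsI hx
  obtain ⟨hR, hRA, hRB, hRC⟩ := hI R (by simp)
  obtain ⟨hS, hSA, hSB, hSC⟩ := hI S (by simp)
  rw [coe_pair]
  exact sOppSide_count_eq_two_of_mem_convexHull hRS (hhull hR)
    (hgen.notMem_affineSpan_pair hR hS hA hRS (Ne.symm hRA) (Ne.symm hSA))
    (hgen.notMem_affineSpan_pair hR hS hB hRS (Ne.symm hRB) (Ne.symm hSB))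
    (hgen.notMem_affineSpan_pair hR hS hC hRS (Ne.symm hRC) (Ne.symm hSC))

end HullTriangle

open Finset in
/-- If the convex hull of a configuration of `n` points in general position has exactly the
three vertices `A`, `B`, `C`, then `n(A,B) + n(A,C) + n(B,C) = n² - 4n + 3`. -/
theorem sepCount_sum_hull_three (n : ℕ) (Pts : Finset (ℝ × ℝ))
    (hgen : GenPos Pts) (hcard : Pts.card = n)
    (A B C : ℝ × ℝ) (hAB : A ≠ B) (hAC : A ≠ C) (hBC : B ≠ C)
    (hhull : hullVertices Pts = {A, B, C}) :
    (sepCount Pts A B + sepCount Pts A C + sepCount Pts B C : ℤ)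
      = (n : ℤ)^2 - 4 * n + 3 := by
  have hABC : {A, B, C} ⊆ (Pts : Set (ℝ × ℝ)) := hhull ▸ hullVertices_subset Pts
  have hA : A ∈ Pts := hABC (by simp)
  have hB : B ∈ Pts := hABC (by simp)
  have hC : C ∈ Pts := hABC (by simp)
  have hPts : ↑Pts ⊆ convexHull ℝ {A, B, C} :=
    hhull ▸ (convexHull_hullVertices Pts).symm ▸ subset_convexHull ℝ _
  have hsepAB := sepCount_eq_card_add_card_separatingPairs hgen hA hB hC hAC hBC hPts
  have hsepAC := sepCount_eq_card_add_card_separatingPairs hgen hA hC hB hAB hBC.symm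
    (by rwa [Set.pair_comm])
  have hsepBC := sepCount_eq_card_add_card_separatingPairs hgen hB hC hA hAB.symm hAC.symm
    (by rwa [Set.pair_comm, Set.insert_comm])
  rw [pair_comm C B] at hsepAC
  rw [pair_comm C A, insert_comm B A] at hsepBC
  have hpairs := card_separatingPairs_add_add hgen hA hB hC hPts
  have hn : #(Pts \ {A, B, C}) + 3 = n := by
    have hsub : {A, B, C} ⊆ Pts := by simp [insert_subset_iff, hA, hB, hC]
    have h3 : #{A, B, C} = 3 := by rw [card_insert_of_notMem (by simp [hAB, hAC]), card_pair hBC]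
    rw [card_sdiff_of_subset hsub, ← h3, Nat.sub_add_cancel (card_le_card hsub), hcard]
  rw [hsepAB, hsepAC, hsepBC, ← hn]
  qify at hpairs ⊢
  rw [Nat.cast_choose_two] at hpairs
  linear_combination hpairs

end
end

section
/- Let 𝒫 be a configuration of n points in general position in the plane whose convex hull has size strictly larger than 3. Then for every triple of distinct points P, Q, R of 𝒫, n(P,Q) + n(P,R) + n(Q,R) < n² − 4n + 3. -/
open scoped Classical

noncomputable section

/-!
Give each pair `s` of points the weight: number of pairs among `P, Q, R` that avoid `s` and are
separated by the line through `s`, plus `|s ∩ {P, Q, R}|`. A line never separates all three pairs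
of a triple, so every weight is at most `2`. Summed over the `n(n-1)/2` pairs, the second summand
contributes `3(n-1)`, hence `n(P,Q) + n(P,R) + n(Q,R) ≤ n(n-1) - 3(n-1) = n² - 4n + 3`. Equality
fails because of a pair `{V, W}` with `V` a hull vertex outside `{P, Q, R}` and `VW` a supporting
line: it separates nothing and meets `{P, Q, R}` at most in `W`, so its weight is at most `1`.
-/

open Finset

section PairCounting

variable {α : Type*} [DecidableEq α]

theorem card_filter_mem_powersetCard_two {s : Finset α} {x : α} (hx : x ∈ s) :
    #{t ∈ s.powersetCard 2 | x ∈ t} = #s - 1 := by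
  simpa using card_filter_powersetCard_subset {x} s 2 (by simpa using hx) (by simp)

theorem sum_card_inter_powersetCard_two {s T : Finset α} (hT : T ⊆ s) :
    ∑ t ∈ s.powersetCard 2, #(T ∩ t) = #T * (#s - 1) :=
  sum_card_inter fun _ hx => card_filter_mem_powersetCard_two (hT hx)

theorem card_triple_inter (s : Finset α) {P Q R : α} (hPQ : P ≠ Q) (hPR : P ≠ R) (hQR : Q ≠ R) :
    #({P, Q, R} ∩ s) =
      (if P ∈ s then 1 else 0) + (if Q ∈ s then 1 else 0) + (if R ∈ s then 1 else 0) := by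
  rw [← filter_mem_eq_inter, card_filter, sum_insert (by simp [hPQ, hPR]), sum_pair hQR, add_assoc]

def pairSepCount (A : Finset α) (sep : Finset α → α → α → Prop) (X Y : α) : ℕ :=
  #{s ∈ A.powersetCard 2 | X ∉ s ∧ Y ∉ s ∧ sep s X Y}

def pairWeight (sep : Finset α → α → α → Prop) (P Q R : α) (s : Finset α) : ℕ :=
  (if P ∉ s ∧ Q ∉ s ∧ sep s P Q then 1 else 0) + (if P ∉ s ∧ R ∉ s ∧ sep s P R then 1 else 0) +
    (if Q ∉ s ∧ R ∉ s ∧ sep s Q R then 1 else 0) + #({P, Q, R} ∩ s)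

variable {sep : Finset α → α → α → Prop} {P Q R : α}

theorem pairWeight_le_two {s : Finset α} (hs : #s = 2) (hPQ : P ≠ Q) (hPR : P ≠ R)
    (hQR : Q ≠ R) (hsep : ¬(sep s P Q ∧ sep s P R ∧ sep s Q R)) :
    pairWeight sep P Q R s ≤ 2 := by
  have hle : #({P, Q, R} ∩ s) ≤ 2 := hs ▸ card_le_card inter_subset_right
  rw [pairWeight, card_triple_inter s hPQ hPR hQR] at *
  split_ifs at hle ⊢ <;> simp_all

theorem pairWeight_le_one {s : Finset α} (hs : #({P, Q, R} ∩ s) ≤ 1)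
    (hsep : ¬sep s P Q ∧ ¬sep s P R ∧ ¬sep s Q R) :
    pairWeight sep P Q R s ≤ 1 := by
  simpa [pairWeight, hsep] using hs

theorem sum_pairWeight {A : Finset α} (hP : P ∈ A) (hQ : Q ∈ A) (hR : R ∈ A) (hPQ : P ≠ Q)
    (hPR : P ≠ R) (hQR : Q ≠ R) :
    ∑ s ∈ A.powersetCard 2, pairWeight sep P Q R s =
      pairSepCount A sep P Q + pairSepCount A sep P R + pairSepCount A sep Q R +
        3 * (#A - 1) := by
  simp only [pairWeight, sum_add_distrib]
  rw [← card_filter, ← card_filter, ← card_filter,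
    sum_card_inter_powersetCard_two (by simp [insert_subset_iff, *]),
    card_insert_of_notMem (by simp [hPQ, hPR]), card_pair hQR]
  rfl

theorem pairSepCount_add_lt {A : Finset α} (hP : P ∈ A) (hQ : Q ∈ A) (hR : R ∈ A)
    (hPQ : P ≠ Q) (hPR : P ≠ R) (hQR : Q ≠ R)
    (hsep : ∀ s, ¬(sep s P Q ∧ sep s P R ∧ sep s Q R)) {s₀ : Finset α}
    (hs₀ : s₀ ∈ A.powersetCard 2) (hs₀T : #({P, Q, R} ∩ s₀) ≤ 1)
    (hs₀sep : ¬sep s₀ P Q ∧ ¬sep s₀ P R ∧ ¬sep s₀ Q R) :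
    pairSepCount A sep P Q + pairSepCount A sep P R + pairSepCount A sep Q R + 3 * (#A - 1) <
      #A * (#A - 1) := by
  have hlt : ∑ s ∈ A.powersetCard 2, pairWeight sep P Q R s < ∑ _s ∈ A.powersetCard 2, 2 :=
    sum_lt_sum (fun s hs => pairWeight_le_two (mem_powersetCard.1 hs).2 hPQ hPR hQR (hsep s))
      ⟨s₀, hs₀, (pairWeight_le_one hs₀T hs₀sep).trans_lt one_lt_two⟩
  rwa [sum_pairWeight hP hQ hR hPQ hPR hQR, sum_const, card_powersetCard, smul_eq_mul,
    Nat.choose_two_right, Nat.div_two_mul_two_of_even (Nat.even_mul_pred_self _)] at hlt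

end PairCounting

def cross (u v : ℝ × ℝ) : ℝ := u.1 * v.2 - u.2 * v.1

theorem mem_affineSpan_pair_iff_cross_eq_zero {V W X : ℝ × ℝ} (hVW : V ≠ W) :
    X ∈ line[ℝ, V, W] ↔ cross (W - V) (X - V) = 0 := by
  rw [mem_affineSpan_pair_iff_exists_lineMap_eq]
  constructor
  · rintro ⟨r, rfl⟩
    simp only [cross, AffineMap.lineMap_apply, vsub_eq_sub, vadd_eq_add, Prod.fst_add,
      Prod.snd_add, Prod.smul_fst, Prod.smul_snd, Prod.fst_sub, Prod.snd_sub, smul_eq_mul]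
    ring
  · intro h
    have hd : (W.1 - V.1) ^ 2 + (W.2 - V.2) ^ 2 ≠ 0 := by
      intro h0
      exact hVW (Prod.ext (by nlinarith) (by nlinarith))
    refine ⟨((X.1 - V.1) * (W.1 - V.1) + (X.2 - V.2) * (W.2 - V.2)) /
      ((W.1 - V.1) ^ 2 + (W.2 - V.2) ^ 2), ?_⟩
    simp only [cross, Prod.fst_sub, Prod.snd_sub] at h
    ext <;> simp only [AffineMap.lineMap_apply, vsub_eq_sub, vadd_eq_add, Prod.fst_add,
      Prod.snd_add, Prod.smul_fst, Prod.smul_snd, Prod.fst_sub, Prod.snd_sub, smul_eq_mul] <;>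
      field_simp
    · linear_combination (W.2 - V.2) * h
    · linear_combination -(W.1 - V.1) * h

theorem not_sOppSide_affineSpan_pair_of_cross_nonneg {V W X Y : ℝ × ℝ} (hVW : V ≠ W)
    (hX : 0 ≤ cross (W - V) (X - V)) (hY : 0 ≤ cross (W - V) (Y - V)) :
    ¬line[ℝ, V, W].SOppSide X Y := by
  rw [AffineSubspace.sOppSide_iff_exists_left (left_mem_affineSpan_pair ℝ V W)]
  rintro ⟨hXl, hYl, p, hp, hray⟩
  rw [mem_affineSpan_pair_iff_cross_eq_zero hVW] at hXl hYl hp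
  have hXV : X - V ≠ 0 := fun h0 => hXl (by simp [h0, cross])
  obtain ⟨r, hr, hpY⟩ := hray.exists_nonneg_left hXV
  have h1 := congrArg Prod.fst hpY
  have h2 := congrArg Prod.snd hpY
  simp only [vsub_eq_sub, Prod.smul_fst, Prod.smul_snd, Prod.fst_sub, Prod.snd_sub,
    smul_eq_mul] at h1 h2
  have hlin : cross (W - V) (Y - V) = -(r * cross (W - V) (X - V)) := by
    simp only [cross, Prod.fst_sub, Prod.snd_sub] at hp ⊢
    linear_combination hp + (W.1 - V.1) * h2 - (W.2 - V.2) * h1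
  have hrX := mul_nonneg hr hX
  exact hYl (by linarith)

theorem exists_cross_nonneg_of_forall_lt {S : Finset (ℝ × ℝ)} (hS : S.Nonempty) {V : ℝ × ℝ}
    {a b : ℝ} (h : ∀ x ∈ S, a * x.1 + b * x.2 < a * V.1 + b * V.2) :
    ∃ W ∈ S, ∀ x ∈ S, 0 ≤ cross (W - V) (x - V) := by
  -- All `x - V` point into the half-plane `a X + b Y < 0`; the ratio is the tangent of the angle
  -- from `-(a, b)` to `x - V`, so `W - V` is the direction closest to `(-b, a)`.
  obtain ⟨W, hW, hmax⟩ := exists_max_image S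
    (fun x => (a * (x.2 - V.2) - b * (x.1 - V.1)) / (a * (V.1 - x.1) + b * (V.2 - x.2))) hS
  refine ⟨W, hW, fun x hx => ?_⟩
  have hdx : 0 < a * (V.1 - x.1) + b * (V.2 - x.2) := by linarith [h x hx]
  have hdW : 0 < a * (V.1 - W.1) + b * (V.2 - W.2) := by linarith [h W hW]
  have hab : 0 < a ^ 2 + b ^ 2 := by
    rcases (add_nonneg (sq_nonneg a) (sq_nonneg b)).lt_or_eq with hab | hab
    · exact hab
    · have ha : a = 0 := by nlinarith
      have hb : b = 0 := by nlinarith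
      simp [ha, hb] at hdW
  have key : (a ^ 2 + b ^ 2) * cross (W - V) (x - V) =
      (a * (V.1 - x.1) + b * (V.2 - x.2)) * (a * (W.2 - V.2) - b * (W.1 - V.1)) -
      (a * (V.1 - W.1) + b * (V.2 - W.2)) * (a * (x.2 - V.2) - b * (x.1 - V.1)) := by
    simp only [cross, Prod.fst_sub, Prod.snd_sub]
    ring
  have hle := (div_le_div_iff₀ hdx hdW).1 (hmax x hx)
  exact nonneg_of_mul_nonneg_right (by linarith) hab

theorem exists_forall_lt_of_mem_extremePoints {A : Finset (ℝ × ℝ)} {V : ℝ × ℝ}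
    (hV : V ∈ (convexHull ℝ (A : Set (ℝ × ℝ))).extremePoints ℝ) :
    ∃ a b : ℝ, ∀ x ∈ A.erase V, a * x.1 + b * x.2 < a * V.1 + b * V.2 := by
  have hsub : ((A.erase V : Finset (ℝ × ℝ)) : Set (ℝ × ℝ)) ⊆ convexHull ℝ ↑A \ {V} := by
    rw [coe_erase]
    exact Set.sdiff_subset_sdiff_left (subset_convexHull ℝ _)
  have hV' : V ∉ convexHull ℝ ((A.erase V : Finset (ℝ × ℝ)) : Set (ℝ × ℝ)) := fun h =>
    ((convex_convexHull ℝ _).mem_extremePoints_iff_mem_sdiff_convexHull_sdiff.1 hV).2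
      (convexHull_mono hsub h)
  obtain ⟨φ, u, hφu, huV⟩ := geometric_hahn_banach_closed_point (convex_convexHull ℝ _)
    ((A.erase V).finite_toSet.isClosed_convexHull (𝕜 := ℝ)) hV'
  have hφ : ∀ z : ℝ × ℝ, φ z = φ (1, 0) * z.1 + φ (0, 1) * z.2 := fun z => by
    conv_lhs => rw [show z = z.1 • ((1 : ℝ), (0 : ℝ)) + z.2 • ((0 : ℝ), (1 : ℝ)) by ext <;> simp]
    rw [map_add, map_smul, map_smul, smul_eq_mul, smul_eq_mul, mul_comm, mul_comm z.2]
  refine ⟨φ (1, 0), φ (0, 1), fun x hx => ?_⟩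
  rw [← hφ, ← hφ]
  exact (hφu x (subset_convexHull ℝ _ hx)).trans huV

theorem exists_forall_not_sOppSide_of_mem_hullVertices {Pts : Finset (ℝ × ℝ)} {V : ℝ × ℝ}
    (hV : V ∈ hullVertices Pts) (hne : (Pts.erase V).Nonempty) :
    ∃ W ∈ Pts, W ≠ V ∧ ∀ X ∈ Pts, ∀ Y ∈ Pts, ¬line[ℝ, V, W].SOppSide X Y := by
  obtain ⟨a, b, hab⟩ := exists_forall_lt_of_mem_extremePoints hV
  obtain ⟨W, hW, hcross⟩ := exists_cross_nonneg_of_forall_lt hne hab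
  have hcross' : ∀ x ∈ Pts, 0 ≤ cross (W - V) (x - V) := fun x hx => by
    by_cases hxV : x = V
    · simp [hxV, cross]
    · exact hcross x (mem_erase.2 ⟨hxV, hx⟩)
  exact ⟨W, mem_of_mem_erase hW, ne_of_mem_erase hW, fun X hX Y hY =>
    not_sOppSide_affineSpan_pair_of_cross_nonneg (ne_of_mem_erase hW).symm
      (hcross' X hX) (hcross' Y hY)⟩

theorem sepCount_eq_pairSepCount (Pts : Finset (ℝ × ℝ)) (X Y : ℝ × ℝ) :
    sepCount Pts X Y =
      pairSepCount Pts (fun s => (affineSpan ℝ (s : Set (ℝ × ℝ))).SOppSide) X Y := by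
  -- `sepCount` filters the image of the pairs in `Set (ℝ × ℝ)` under the `Finset` monad.
  have hbind : (do let s ← (Pts \ {X, Y}).powersetCard 2; pure (s : Set (ℝ × ℝ))) =
      ((Pts \ {X, Y}).powersetCard 2).map ⟨(↑), coe_injective⟩ := by
    ext t; simp [eq_comm]
  rw [sepCount, pairSepCount, hbind, filter_map, card_map]
  congr 1
  ext s
  simp only [mem_filter, mem_powersetCard, subset_sdiff, disjoint_insert_right,
    disjoint_singleton_right, Function.comp_apply, Function.Embedding.coeFn_mk]
  tauto

theorem sepCount_sum_lt_of_hull_gt_three_general (n : ℕ) (Pts : Finset (ℝ × ℝ))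
    (hcard : Pts.card = n)
    (hhull : 3 < (hullVertices Pts).ncard)
    (P Q R : ℝ × ℝ) (hP : P ∈ Pts) (hQ : Q ∈ Pts) (hR : R ∈ Pts)
    (hPQ : P ≠ Q) (hPR : P ≠ R) (hQR : Q ≠ R) :
    (sepCount Pts P Q + sepCount Pts P R + sepCount Pts Q R : ℤ)
      < (n : ℤ)^2 - 4 * n + 3 := by
  subst hcard
  obtain ⟨V, hV, hVT⟩ :
      ∃ V ∈ hullVertices Pts, V ∉ (({P, Q, R} : Finset (ℝ × ℝ)) : Set (ℝ × ℝ)) :=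
    Set.exists_mem_notMem_of_ncard_lt_ncard
      (by rw [Set.ncard_coe_finset]; exact card_le_three.trans_lt hhull)
  have hVP : V ≠ P := fun h => hVT (by simp [h])
  obtain ⟨W, hW, hWV, hsupp⟩ :=
    exists_forall_not_sOppSide_of_mem_hullVertices hV ⟨P, mem_erase.2 ⟨hVP.symm, hP⟩⟩
  have hs₀ : {V, W} ∈ Pts.powersetCard 2 := mem_powersetCard.2
    ⟨insert_subset_iff.2 ⟨extremePoints_convexHull_subset hV, singleton_subset_iff.2 hW⟩,
      card_pair hWV.symm⟩
  have hs₀T : #({P, Q, R} ∩ {V, W}) ≤ 1 := by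
    refine (card_le_card fun x hx => ?_).trans (card_singleton W).le
    obtain ⟨hxT, hx⟩ := mem_inter.1 hx
    rcases mem_insert.1 hx with rfl | hx
    · exact absurd hxT hVT
    · exact hx
  have key := pairSepCount_add_lt (sep := fun s => (affineSpan ℝ (s : Set (ℝ × ℝ))).SOppSide)
    hP hQ hR hPQ hPR hQR (fun _ ⟨h₁, h₂, h₃⟩ => (h₁.trans h₃).not_sOppSide h₂) hs₀ hs₀T
    (by simp only [coe_pair]; exact ⟨hsupp P hP Q hQ, hsupp P hP R hR, hsupp Q hQ R hR⟩)
  simp only [← sepCount_eq_pairSepCount] at key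
  have h1 : 1 ≤ #Pts := card_pos.2 ⟨P, hP⟩
  zify [h1] at key
  linarith

/-- If the convex hull of a configuration of `n` points in general position has size strictly
larger than `3`, then for every triple of distinct points `P`, `Q`, `R` of the configuration,
`n(P,Q) + n(P,R) + n(Q,R) < n² - 4n + 3`. -/
theorem sepCount_sum_lt_of_hull_gt_three (n : ℕ) (Pts : Finset (ℝ × ℝ))
    (hgen : GenPos Pts) (hcard : Pts.card = n)
    (hhull : 3 < (hullVertices Pts).ncard)
    (P Q R : ℝ × ℝ) (hP : P ∈ Pts) (hQ : Q ∈ Pts) (hR : R ∈ Pts)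
    (hPQ : P ≠ Q) (hPR : P ≠ R) (hQR : Q ≠ R) :
    (sepCount Pts P Q + sepCount Pts P R + sepCount Pts Q R : ℤ)
      < (n : ℤ)^2 - 4 * n + 3 :=
  sepCount_sum_lt_of_hull_gt_three_general n Pts hcard hhull P Q R hP hQ hR hPQ hPR hQR

end
end
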